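/- Let V be a real vector space and (g, [·,·]_g, ⟨·,·⟩_g) a quadratic vector space. Let K be an isometry of (g, ⟨·,·⟩_g), Φ : V → g linear, and β : V × V → ℝ a skew-symmetric bilinear form. Define I on E = V ⊕ V* ⊕ g by I(X) = X + i_Xβ - Φ*Φ(X) + Φ(X), I(η) = η, I(r) = -2Φ*K(r) + K(r), where (Φ*s)(X) := ⟨s, Φ(X)⟩_g defines Φ* : g → V*. Then I preserves the pairing ⟨X+ξ+r, Y+η+s⟩ = (1/2)(η(X)+ξ(Y)) + ⟨r,s⟩_g on E, and I is invertible with inverse given by the same formulas with (K, Φ, β) replaced by (K⁻¹, -K⁻¹Φ, -β). -/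

import Mathlib

/-!
The maps `I(K, Φ, β)` compose like a group: for an isometry `K'`,
`I(K', Φ', β') ∘ I(K, Φ, β) = I(K'K, Φ' + K'Φ, β'')`, where
`β''(X, Y) = β'(X, Y) + β(X, Y) + ⟨Φ'X, K'ΦY⟩ - ⟨K'ΦX, Φ'Y⟩` absorbs the cross terms of
`(Φ' + K'Φ)*(Φ' + K'Φ)`. For `(K⁻¹, -K⁻¹Φ, -β)` composed with `(K, Φ, β)` in either order the
data collapse to `(1, 0, 0)`, and `I(1, 0, 0)` is the identity. That `I` preserves the pairing
is a direct computation: the `β`-terms cancel by skewness, the `Φ*Φ`-terms against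
`⟨ΦX, ΦY⟩`, and `⟨Kr, Ks⟩ = ⟨r, s⟩`.
-/

/-- The canonical pairing on `E = V ⊕ V* ⊕ g`. -/
noncomputable def pairE {V g : Type*} [AddCommGroup V] [Module ℝ V] [AddCommGroup g] [Module ℝ g]
    (bg : LinearMap.BilinForm ℝ g) (u v : V × Module.Dual ℝ V × g) : ℝ :=
  (1 / 2 : ℝ) * (v.2.1 u.1 + u.2.1 v.1) + bg u.2.2 v.2.2

/-- The map `I` on `E = V ⊕ V* ⊕ g` determined by a triple `(K, Φ, β)`:
`I(X) = X + i_Xβ - Φ*Φ(X) + Φ(X)`, `I(η) = η`, `I(r) = -2Φ*K(r) + K(r)`. -/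
noncomputable def ImapE {V g : Type*} [AddCommGroup V] [Module ℝ V] [AddCommGroup g] [Module ℝ g]
    (K : g →ₗ[ℝ] g) (Φ : V →ₗ[ℝ] g) (Φs : g →ₗ[ℝ] Module.Dual ℝ V)
    (β : V →ₗ[ℝ] Module.Dual ℝ V)
    (u : V × Module.Dual ℝ V × g) : V × Module.Dual ℝ V × g :=
  (u.1,
   β u.1 - Φs (Φ u.1) + u.2.1 - (2 : ℝ) • Φs (K u.2.2),
   Φ u.1 + K u.2.2)

section

variable {V g : Type*} [AddCommGroup V] [Module ℝ V] [AddCommGroup g] [Module ℝ g]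
  {bg : LinearMap.BilinForm ℝ g}

theorem pairE_ImapE_ImapE {K : g →ₗ[ℝ] g} {Φ : V →ₗ[ℝ] g} {Φs : g →ₗ[ℝ] Module.Dual ℝ V}
    {β : V →ₗ[ℝ] Module.Dual ℝ V} (hbg_symm : ∀ r s : g, bg r s = bg s r)
    (hKisom : ∀ r s : g, bg (K r) (K s) = bg r s) (hΦs : ∀ (s : g) (X : V), Φs s X = bg s (Φ X))
    (hβskew : ∀ X Y : V, β X Y = - β Y X) (u v : V × Module.Dual ℝ V × g) :
    pairE bg (ImapE K Φ Φs β u) (ImapE K Φ Φs β v) = pairE bg u v := by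
  obtain ⟨X, ξ, r⟩ := u
  obtain ⟨Y, η, s⟩ := v
  simp only [pairE, ImapE, LinearMap.add_apply, LinearMap.sub_apply, LinearMap.smul_apply,
    smul_eq_mul, hΦs, map_add, hKisom]
  rw [hβskew Y X, hbg_symm (Φ Y) (Φ X), hbg_symm (K s) (Φ X)]
  ring

theorem ImapE_ImapE {K K' K'' : g →ₗ[ℝ] g} {Φ Φ' Φ'' : V →ₗ[ℝ] g}
    {Φs Φs' Ψ : g →ₗ[ℝ] Module.Dual ℝ V} {β β' β'' : V →ₗ[ℝ] Module.Dual ℝ V}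
    (hK'isom : ∀ r s : g, bg (K' r) (K' s) = bg r s)
    (hΦs : ∀ (s : g) (X : V), Φs s X = bg s (Φ X))
    (hΦs' : ∀ (s : g) (X : V), Φs' s X = bg s (Φ' X))
    (hΨ : ∀ (s : g) (X : V), Ψ s X = bg s (Φ'' X))
    (hK'' : ∀ r : g, K'' r = K' (K r)) (hΦ'' : ∀ X : V, Φ'' X = Φ' X + K' (Φ X))
    (hβ'' : ∀ X Y : V, β'' X Y = β' X Y + β X Y + bg (Φ' X) (K' (Φ Y)) - bg (K' (Φ X)) (Φ' Y))
    (u : V × Module.Dual ℝ V × g) :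
    ImapE K' Φ' Φs' β' (ImapE K Φ Φs β u) = ImapE K'' Φ'' Ψ β'' u := by
  obtain ⟨X, ξ, r⟩ := u
  refine Prod.ext rfl (Prod.ext ?_ ?_)
  · ext Y
    simp only [ImapE, LinearMap.add_apply, LinearMap.sub_apply, LinearMap.smul_apply,
      smul_eq_mul, hΦs, hΦs', hΨ, hK'', hΦ'', hβ'', map_add, hK'isom]
    ring
  · simp only [ImapE, hK'', hΦ'', map_add]
    abel

theorem ImapE_id_zero (u : V × Module.Dual ℝ V × g) :
    ImapE (LinearMap.id : g →ₗ[ℝ] g) (0 : V →ₗ[ℝ] g) 0 0 u = u := by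
  simp [ImapE]

end

theorem stmt_10_general {V g : Type*} [AddCommGroup V] [Module ℝ V]
    [AddCommGroup g] [Module ℝ g]
    (bg : LinearMap.BilinForm ℝ g)
    (hbg_symm : ∀ r s : g, bg r s = bg s r)
    (K : g →ₗ[ℝ] g) (Kinv : g →ₗ[ℝ] g)
    (hK1 : ∀ r : g, Kinv (K r) = r) (hK2 : ∀ r : g, K (Kinv r) = r)
    (hKisom : ∀ r s : g, bg (K r) (K s) = bg r s)
    (Φ : V →ₗ[ℝ] g) (Φs : g →ₗ[ℝ] Module.Dual ℝ V)
    (hΦs : ∀ (s : g) (X : V), Φs s X = bg s (Φ X))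
    (β : V →ₗ[ℝ] Module.Dual ℝ V)
    (hβskew : ∀ X Y : V, β X Y = - β Y X)
    -- the metric adjoint of `Φ' = -K⁻¹Φ`:
    (Φs' : g →ₗ[ℝ] Module.Dual ℝ V)
    (hΦs' : ∀ (s : g) (X : V), Φs' s X = bg s (-(Kinv (Φ X)))) :
    (∀ u v : V × Module.Dual ℝ V × g,
        pairE bg (ImapE K Φ Φs β u) (ImapE K Φ Φs β v) = pairE bg u v) ∧
    (∀ u : V × Module.Dual ℝ V × g,
        ImapE Kinv (-(Kinv ∘ₗ Φ)) Φs' (-β) (ImapE K Φ Φs β u) = u ∧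
        ImapE K Φ Φs β (ImapE Kinv (-(Kinv ∘ₗ Φ)) Φs' (-β) u) = u) := by
  have hKinv_isom : ∀ r s : g, bg (Kinv r) (Kinv s) = bg r s := fun r s => by
    rw [← hKisom, hK2, hK2]
  refine ⟨pairE_ImapE_ImapE hbg_symm hKisom hΦs hβskew, fun u => ⟨?_, ?_⟩⟩
  · rw [ImapE_ImapE (K'' := LinearMap.id) (Φ'' := 0) (Ψ := 0) (β'' := 0) hKinv_isom hΦs hΦs',
      ImapE_id_zero] <;> intros <;> simp [hK1]
  · rw [ImapE_ImapE (K'' := LinearMap.id) (Φ'' := 0) (Ψ := 0) (β'' := 0) hKisom hΦs' hΦs,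
      ImapE_id_zero] <;> intros <;> simp [hK2]

/-- The map `I` defined by `(K, Φ, β)` (with `K` an isometry, `β`
skew) preserves the canonical pairing on `E = V ⊕ V* ⊕ g` and is invertible with
inverse given by the same formulas for `(K⁻¹, -K⁻¹Φ, -β)`. -/
theorem stmt_10 {V g : Type*} [AddCommGroup V] [Module ℝ V] [FiniteDimensional ℝ V]
    [AddCommGroup g] [Module ℝ g] [FiniteDimensional ℝ g]
    (bg : LinearMap.BilinForm ℝ g)
    (hbg_symm : ∀ r s : g, bg r s = bg s r)
    (hbg_nd : ∀ r : g, (∀ s : g, bg r s = 0) → r = 0)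
    (K : g →ₗ[ℝ] g) (Kinv : g →ₗ[ℝ] g)
    (hK1 : ∀ r : g, Kinv (K r) = r) (hK2 : ∀ r : g, K (Kinv r) = r)
    (hKisom : ∀ r s : g, bg (K r) (K s) = bg r s)
    (Φ : V →ₗ[ℝ] g) (Φs : g →ₗ[ℝ] Module.Dual ℝ V)
    (hΦs : ∀ (s : g) (X : V), Φs s X = bg s (Φ X))
    (β : V →ₗ[ℝ] Module.Dual ℝ V)
    (hβskew : ∀ X Y : V, β X Y = - β Y X)
    -- the metric adjoint of `Φ' = -K⁻¹Φ`:
    (Φs' : g →ₗ[ℝ] Module.Dual ℝ V)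
    (hΦs' : ∀ (s : g) (X : V), Φs' s X = bg s (-(Kinv (Φ X)))) :
    (∀ u v : V × Module.Dual ℝ V × g,
        pairE bg (ImapE K Φ Φs β u) (ImapE K Φ Φs β v) = pairE bg u v) ∧
    (∀ u : V × Module.Dual ℝ V × g,
        ImapE Kinv (-(Kinv ∘ₗ Φ)) Φs' (-β) (ImapE K Φ Φs β u) = u ∧
        ImapE K Φ Φs β (ImapE Kinv (-(Kinv ∘ₗ Φ)) Φs' (-β) u) = u) :=
  stmt_10_general bg hbg_symm K Kinv hK1 hK2 hKisom Φ Φs hΦs β hβskew Φs' hΦs'
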